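/- Let S ⊂ [m]×[n], U ∈ ℝ^{m×n}, r ∈ [m−1], and let X be a critical point of d_U on 𝓛_r^S in the sense of Lagrange multipliers: there exist multipliers λ_{I,J} (over all |I|=|J|=r+1) and μ_k (over the constraints x_{ij}=0, (i,j)∈S) such that u_{ij} − x_{ij} = Σ_{I,J} λ_{I,J} ∂M_{I,J}/∂x_{ij}(X) + Σ_k μ_k ∂L_k/∂x_{ij}(X) for all (i,j), together with M_{I,J}(X) = 0 for all |I|=|J|=r+1 and x_{ij} = 0 for (i,j) ∈ S. If i ∼_R^S j (rows i and j have identical zero patterns in S), then X satisfies the linear relation (XUᵀ − UXᵀ)_{ij} = 0. Similarly, if columns i and j have identical zero patterns in S, then (XᵀU − UᵀX)_{ij} = 0. -/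

import Mathlib

/-!
Along the lines `t ↦ (1 + tA)X` and `t ↦ X(1 + tB)` every `(r+1)`-minor stays `0`, because a
minor of `AX` expands, row by row, into minors of `X`. Hence the gradient of each minor at `X`
is orthogonal to the directions `AX` and `XB`, and pairing the Lagrange condition
`U - X = Σ λ ∇M + Σ μ e_p` with such a direction `W` leaves only `Σ_{p ∈ S} μ_p W_p`, which
vanishes when `W` is zero on `S`. For `W = E_{ab} X` (row `b` of `X` moved to row `a`) this
happens when the zero pattern of row `a` is contained in that of row `b`, and the pairing is
`(X(U - X)ᵀ)_{ba}`. If rows `i, j` have the same pattern, both `(X(U - X)ᵀ)_{ij}` and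
`(X(U - X)ᵀ)_{ji}` vanish, and their difference is `(XUᵀ - UXᵀ)_{ij}`. Columns are handled by
`W = X E_{ba}`.
-/

open Matrix
open scoped Classical

/-- The minor with rows `I` and columns `J` of an `m × n` complex matrix; it is `0` by
convention when `|I| ≠ |J|`. -/
noncomputable def minorC {m n : ℕ} (Y : Matrix (Fin m) (Fin n) ℂ)
    (I : Finset (Fin m)) (J : Finset (Fin n)) : ℂ :=
  if h : I.card = J.card then
    (Y.submatrix (⇑(I.orderEmbOfFin rfl)) (⇑(J.orderEmbOfFin h.symm))).det
  else 0

/-- The minor `M_{I,J}` as a function of the `m·n` matrix entries. -/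
noncomputable def minorFun {m n : ℕ} (I : Finset (Fin m)) (J : Finset (Fin n)) :
    (Fin m × Fin n → ℂ) → ℂ :=
  fun Y => minorC (Matrix.of fun a b => Y (a, b)) I J

theorem Tuple.exists_perm_comp_eq_orderEmbOfFin {α : Type*} [LinearOrder α] {k : ℕ}
    (f : Fin k → α) (hf : Function.Injective f) :
    ∃ σ : Equiv.Perm (Fin k), f ∘ σ =
      (Finset.univ.image f).orderEmbOfFin (by simp [Finset.card_image_of_injective _ hf]) :=
  ⟨Tuple.sort f, Finset.orderEmbOfFin_unique _ (fun _ => Finset.mem_image_of_mem _ (by simp))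
    ((Tuple.monotone_sort f).strictMono_of_injective (hf.comp (Tuple.sort f).injective))⟩

theorem Matrix.det_mul_eq_sum_prod_mul_det_submatrix {R ι κ : Type*} [CommRing R]
    [Fintype ι] [Fintype κ] [DecidableEq κ] (B : Matrix κ ι R) (C : Matrix ι κ R) :
    (B * C).det = ∑ p : κ → ι, (∏ a, B a (p a)) * (C.submatrix p id).det := by
  calc (B * C).det = detRowAlternating fun a => ∑ l, B a l • C l := by
        show detRowAlternating (B * C) = _
        congr 1
        funext a b
        simp [mul_apply]
    _ = ∑ p : κ → ι, detRowAlternating fun a => B a (p a) • C (p a) :=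
        MultilinearMap.map_sum _ _
    _ = ∑ p : κ → ι, (∏ a, B a (p a)) * (C.submatrix p id).det :=
        Finset.sum_congr rfl fun p _ =>
          MultilinearMap.map_smul_univ _ (fun a => B a (p a)) (fun a => C (p a))

section Minors

variable {R l m n o κ : Type*} [CommRing R]

theorem Matrix.det_submatrix_mul_left_eq_zero [Fintype m] [Fintype κ] [DecidableEq κ]
    {X : Matrix m n R} (hX : ∀ (f : κ → m) (g : κ → n), (X.submatrix f g).det = 0)
    (A : Matrix l m R) (f : κ → l) (g : κ → n) : ((A * X).submatrix f g).det = 0 := by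
  rw [submatrix_mul A X f id g Function.bijective_id,
    det_mul_eq_sum_prod_mul_det_submatrix]
  refine Finset.sum_eq_zero fun p _ => ?_
  rw [submatrix_submatrix, hX, mul_zero]

theorem Matrix.det_submatrix_mul_right_eq_zero [Fintype n] [Fintype κ] [DecidableEq κ]
    {X : Matrix m n R} (hX : ∀ (f : κ → m) (g : κ → n), (X.submatrix f g).det = 0)
    (B : Matrix n o R) (f : κ → m) (g : κ → o) : ((X * B).submatrix f g).det = 0 := by
  rw [← det_transpose, transpose_submatrix, transpose_mul]
  refine det_submatrix_mul_left_eq_zero (fun g f => ?_) Bᵀ g f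
  rw [← transpose_submatrix, det_transpose, hX]

end Minors

theorem minorC_eq {m n : ℕ} (Y : Matrix (Fin m) (Fin n) ℂ) {I : Finset (Fin m)}
    {J : Finset (Fin n)} {k : ℕ} (hI : I.card = k) (hJ : J.card = k) :
    minorC Y I J = (Y.submatrix (I.orderEmbOfFin hI) (J.orderEmbOfFin hJ)).det := by
  subst hI
  rw [minorC, dif_pos hJ.symm]

theorem minorFun_entries {m n : ℕ} (Y : Matrix (Fin m) (Fin n) ℂ) (I : Finset (Fin m))
    (J : Finset (Fin n)) : minorFun I J (fun p => Y p.1 p.2) = minorC Y I J :=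
  rfl

theorem det_submatrix_eq_zero_of_minorC_eq_zero {m n k : ℕ} {X : Matrix (Fin m) (Fin n) ℂ}
    (hX : ∀ I J, I.card = k → J.card = k → minorC X I J = 0)
    (f : Fin k → Fin m) (g : Fin k → Fin n) : (X.submatrix f g).det = 0 := by
  by_cases hf : Function.Injective f
  swap
  · obtain ⟨a, b, hab, hne⟩ := Function.not_injective_iff.mp hf
    exact det_zero_of_row_eq hne (by ext; simp [hab])
  by_cases hg : Function.Injective g
  swap
  · obtain ⟨a, b, hab, hne⟩ := Function.not_injective_iff.mp hg
    exact det_zero_of_column_eq hne (by simp [hab])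
  obtain ⟨σ, hσ⟩ := Tuple.exists_perm_comp_eq_orderEmbOfFin f hf
  obtain ⟨τ, hτ⟩ := Tuple.exists_perm_comp_eq_orderEmbOfFin g hg
  have hperm : (((X.submatrix f g).submatrix σ id).submatrix id τ).det = 0 := by
    rw [submatrix_submatrix, submatrix_submatrix, Function.comp_id, Function.id_comp, hσ, hτ,
      ← minorC_eq]
    exact hX _ _ (by simp [Finset.card_image_of_injective _ hf])
      (by simp [Finset.card_image_of_injective _ hg])
  rw [det_permute', det_permute] at hperm
  simpa using hperm

/-- `fderiv` is `0` where `f` is not differentiable, so no regularity hypothesis is needed. -/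
theorem fderiv_apply_eq_zero_of_forall_add_smul {𝕜 E F : Type*} [NontriviallyNormedField 𝕜]
    [NormedAddCommGroup E] [NormedSpace 𝕜 E] [NormedAddCommGroup F] [NormedSpace 𝕜 F]
    {f : E → F} {x v : E} (h : ∀ t : 𝕜, f (x + t • v) = 0) : fderiv 𝕜 f x v = 0 := by
  by_cases hf : DifferentiableAt 𝕜 f x
  · rw [← hf.lineDeriv_eq_fderiv, lineDeriv]
    simp_rw [h]
    exact deriv_const _ _
  · rw [fderiv_zero_of_not_differentiableAt hf, _root_.zero_apply]

theorem fderiv_minorFun_mul_left_eq_zero {m n k : ℕ} {X : Matrix (Fin m) (Fin n) ℂ}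
    (hX : ∀ (f : Fin k → Fin m) (g : Fin k → Fin n), (X.submatrix f g).det = 0)
    {I : Finset (Fin m)} {J : Finset (Fin n)} (hI : I.card = k) (hJ : J.card = k)
    (A : Matrix (Fin m) (Fin m) ℂ) :
    fderiv ℂ (minorFun I J) (fun p => X p.1 p.2) (fun p => (A * X) p.1 p.2) = 0 :=
  fderiv_apply_eq_zero_of_forall_add_smul fun t => by
    have hline : ((fun p => X p.1 p.2) + t • fun p => (A * X) p.1 p.2 : Fin m × Fin n → ℂ)
        = fun p => (X + t • (A * X)) p.1 p.2 := rfl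
    have hmat : X + t • (A * X) = (1 + t • A) * X := by
      rw [Matrix.add_mul, Matrix.one_mul, Matrix.smul_mul]
    rw [hline, minorFun_entries, hmat, minorC_eq _ hI hJ]
    exact det_submatrix_mul_left_eq_zero hX _ _ _

theorem fderiv_minorFun_mul_right_eq_zero {m n k : ℕ} {X : Matrix (Fin m) (Fin n) ℂ}
    (hX : ∀ (f : Fin k → Fin m) (g : Fin k → Fin n), (X.submatrix f g).det = 0)
    {I : Finset (Fin m)} {J : Finset (Fin n)} (hI : I.card = k) (hJ : J.card = k)
    (B : Matrix (Fin n) (Fin n) ℂ) :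
    fderiv ℂ (minorFun I J) (fun p => X p.1 p.2) (fun p => (X * B) p.1 p.2) = 0 :=
  fderiv_apply_eq_zero_of_forall_add_smul fun t => by
    have hline : ((fun p => X p.1 p.2) + t • fun p => (X * B) p.1 p.2 : Fin m × Fin n → ℂ)
        = fun p => (X + t • (X * B)) p.1 p.2 := rfl
    have hmat : X + t • (X * B) = X * (1 + t • B) := by
      rw [Matrix.mul_add, Matrix.mul_one, Matrix.mul_smul]
    rw [hline, minorFun_entries, hmat, minorC_eq _ hI hJ]
    exact det_submatrix_mul_right_eq_zero hX _ _ _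

theorem sum_mul_eq_zero_of_lagrange {𝕜 ι κ : Type*} [NormedField 𝕜] [Fintype κ]
    [DecidableEq κ] {F : Finset ι} {D : ι → (κ → 𝕜) →L[𝕜] 𝕜} {lam : ι → 𝕜}
    {S : Finset κ} {mu : κ → 𝕜} {G : κ → 𝕜}
    (hG : ∀ p, G p = ∑ i ∈ F, lam i * D i (Pi.single p 1) +
      ∑ q ∈ S, mu q * if p = q then 1 else 0)
    {W : κ → 𝕜} (hWS : ∀ q ∈ S, W q = 0) (hWD : ∀ i ∈ F, D i W = 0) :
    ∑ p, W p * G p = 0 := by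
  have hD : ∀ i ∈ F, ∑ p, W p * D i (Pi.single p 1) = 0 := fun i hi =>
    calc ∑ p, W p * D i (Pi.single p 1) = D i (∑ p, Pi.single p (W p)) := by
          rw [map_sum]
          refine Finset.sum_congr rfl fun p _ => ?_
          rw [← smul_eq_mul, ← map_smul, ← Pi.single_smul', smul_eq_mul, mul_one]
      _ = 0 := by rw [Finset.univ_sum_single, hWD i hi]
  have hS : ∀ p, W p * ∑ q ∈ S, mu q * (if p = q then 1 else 0) = 0 := fun p => by
    simp only [mul_ite, mul_one, mul_zero, Finset.sum_ite_eq]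
    exact ite_eq_right_iff.2 fun hp => by rw [hWS p hp, zero_mul]
  simp only [hG, mul_add, hS, add_zero, Finset.mul_sum]
  rw [Finset.sum_comm]
  refine Finset.sum_eq_zero fun i hi => ?_
  simp only [mul_left_comm (W _), ← Finset.mul_sum, hD i hi, mul_zero]

theorem Matrix.mul_transpose_sub_mul_transpose {R m n : Type*} [CommRing R] [Fintype n]
    (X U : Matrix m n R) : X * Uᵀ - U * Xᵀ = X * (U - X)ᵀ - (X * (U - X)ᵀ)ᵀ := by
  simp [Matrix.mul_sub, transpose_mul]

theorem Matrix.transpose_mul_sub_transpose_mul {R m n : Type*} [CommRing R] [Fintype m]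
    (X U : Matrix m n R) : Xᵀ * U - Uᵀ * X = Xᵀ * (U - X) - (Xᵀ * (U - X))ᵀ := by
  simp [Matrix.mul_sub, transpose_mul]

section Pairing

variable {R m n : Type*} [Semiring R] [Fintype m] [Fintype n]

theorem Matrix.sum_sum_single_mul_mul [DecidableEq m] (X G : Matrix m n R) (a b : m) :
    ∑ c, ∑ d, (single a b (1 : R) * X) c d * G c d = (X * Gᵀ) b a := by
  rw [Fintype.sum_eq_single a fun c hc => Finset.sum_eq_zero fun d _ => by
    rw [single_mul_apply_of_ne _ _ _ _ _ hc, zero_mul]]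
  simp only [single_mul_apply_same, one_mul]
  rfl

theorem Matrix.sum_sum_mul_single_mul [DecidableEq n] (X G : Matrix m n R) (a b : n) :
    ∑ c, ∑ d, (X * single b a (1 : R)) c d * G c d = (Xᵀ * G) b a := by
  rw [Finset.sum_congr rfl fun c _ => Fintype.sum_eq_single a fun d hd => by
    rw [mul_single_apply_of_ne _ _ _ _ _ hd, zero_mul]]
  simp only [mul_single_apply_same, mul_one]
  rfl

end Pairing

section ZeroPattern

variable {R m n : Type*} [Semiring R] {S : Finset (m × n)}
  {X : Matrix m n R}

theorem Matrix.single_mul_eq_zero_on_of_row_pattern_subset [Fintype m] [DecidableEq m]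
    (hX : ∀ p ∈ S, X p.1 p.2 = 0) {a b : m} (hab : ∀ k, (a, k) ∈ S → (b, k) ∈ S) :
    ∀ p ∈ S, (single a b (1 : R) * X) p.1 p.2 = 0 := by
  rintro ⟨c, d⟩ hp
  by_cases hc : c = a
  · subst hc
    rw [single_mul_apply_same, one_mul, hX (b, d) (hab d hp)]
  · exact single_mul_apply_of_ne _ _ _ _ _ hc _

theorem Matrix.mul_single_eq_zero_on_of_column_pattern_subset [Fintype n] [DecidableEq n]
    (hX : ∀ p ∈ S, X p.1 p.2 = 0) {a b : n} (hab : ∀ k, (k, a) ∈ S → (k, b) ∈ S) :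
    ∀ p ∈ S, (X * single b a (1 : R)) p.1 p.2 = 0 := by
  rintro ⟨c, d⟩ hp
  by_cases hd : d = a
  · subst hd
    rw [mul_single_apply_same, mul_one, hX (c, b) (hab c hp)]
  · exact mul_single_apply_of_ne _ _ _ _ _ hd _

end ZeroPattern

theorem stmt_14_general {m n : ℕ} (r : ℕ)
    (S : Finset (Fin m × Fin n))
    (U : Matrix (Fin m) (Fin n) ℝ) (X : Matrix (Fin m) (Fin n) ℂ)
    (lam : Finset (Fin m) × Finset (Fin n) → ℂ) (mu : Fin m × Fin n → ℂ)
    (hminors : ∀ (I : Finset (Fin m)) (J : Finset (Fin n)),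
      I.card = r + 1 → J.card = r + 1 → minorC X I J = 0)
    (hzero : ∀ p ∈ S, X p.1 p.2 = 0)
    (hlag : ∀ i j, (U i j : ℂ) - X i j =
      (∑ IJ ∈ Finset.univ.filter
          (fun IJ : Finset (Fin m) × Finset (Fin n) =>
            IJ.1.card = r + 1 ∧ IJ.2.card = r + 1),
        lam IJ *
          fderiv ℂ (minorFun IJ.1 IJ.2) (fun p => X p.1 p.2) (Pi.single (i, j) 1)) +
      ∑ p ∈ S, mu p * (if (i, j) = p then 1 else 0)) :
    (∀ i j : Fin m, (∀ k, (i, k) ∈ S ↔ (j, k) ∈ S) →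
      (X * (U.map (Complex.ofReal))ᵀ - (U.map (Complex.ofReal)) * Xᵀ) i j = 0) ∧
    (∀ i j : Fin n, (∀ k, (k, i) ∈ S ↔ (k, j) ∈ S) →
      (Xᵀ * (U.map (Complex.ofReal)) - (U.map (Complex.ofReal))ᵀ * X) i j = 0) := by
  set G : Matrix (Fin m) (Fin n) ℂ := U.map Complex.ofReal - X
  have hX := det_submatrix_eq_zero_of_minorC_eq_zero hminors
  have horth : ∀ W : Matrix (Fin m) (Fin n) ℂ, (∀ p ∈ S, W p.1 p.2 = 0) →
      (∀ IJ : Finset (Fin m) × Finset (Fin n), IJ.1.card = r + 1 → IJ.2.card = r + 1 →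
        fderiv ℂ (minorFun IJ.1 IJ.2) (fun p => X p.1 p.2) (fun p => W p.1 p.2) = 0) →
      ∑ a, ∑ b, W a b * G a b = 0 := fun W hWS hWD => by
    have hlag' : ∀ p : Fin m × Fin n, G p.1 p.2 = _ := fun p => hlag p.1 p.2
    rw [← Fintype.sum_prod_type']
    refine sum_mul_eq_zero_of_lagrange hlag' hWS fun IJ hIJ => ?_
    rw [Finset.mem_filter] at hIJ
    exact hWD IJ hIJ.2.1 hIJ.2.2
  have hrow : ∀ a b : Fin m, (∀ k, (a, k) ∈ S → (b, k) ∈ S) → (X * Gᵀ) b a = 0 :=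
    fun a b hab => sum_sum_single_mul_mul X G a b ▸
      horth _ (single_mul_eq_zero_on_of_row_pattern_subset hzero hab)
        fun _ hI hJ => fderiv_minorFun_mul_left_eq_zero hX hI hJ _
  have hcol : ∀ a b : Fin n, (∀ k, (k, a) ∈ S → (k, b) ∈ S) → (Xᵀ * G) b a = 0 :=
    fun a b hab => sum_sum_mul_single_mul X G a b ▸
      horth _ (mul_single_eq_zero_on_of_column_pattern_subset hzero hab)
        fun _ hI hJ => fderiv_minorFun_mul_right_eq_zero hX hI hJ _
  refine ⟨fun i j hij => ?_, fun i j hij => ?_⟩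
  · rw [mul_transpose_sub_mul_transpose, Matrix.sub_apply, transpose_apply,
      hrow j i fun k => (hij k).2, hrow i j fun k => (hij k).1, sub_zero]
  · rw [transpose_mul_sub_transpose_mul, Matrix.sub_apply, transpose_apply,
      hcol j i fun k => (hij k).2, hcol i j fun k => (hij k).1, sub_zero]

/-- A Lagrange critical point `X` of `d_U` on `𝓛_r^S` (all `(r+1)`-minors vanish, the entries
in `S` vanish, and the gradient condition with multipliers `lam`, `mu` holds) satisfies the
linear relations `(XUᵀ − UXᵀ)_{ij} = 0` whenever rows `i, j` have the same zero pattern in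
`S`, and `(XᵀU − UᵀX)_{ij} = 0` whenever columns `i, j` have the same zero pattern in `S`. -/
theorem stmt_14 {m n : ℕ} (hmn : m ≤ n) (r : ℕ) (hr1 : 1 ≤ r) (hrm : r ≤ m - 1)
    (S : Finset (Fin m × Fin n))
    (U : Matrix (Fin m) (Fin n) ℝ) (X : Matrix (Fin m) (Fin n) ℂ)
    (lam : Finset (Fin m) × Finset (Fin n) → ℂ) (mu : Fin m × Fin n → ℂ)
    (hminors : ∀ (I : Finset (Fin m)) (J : Finset (Fin n)),
      I.card = r + 1 → J.card = r + 1 → minorC X I J = 0)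
    (hzero : ∀ p ∈ S, X p.1 p.2 = 0)
    (hlag : ∀ i j, (U i j : ℂ) - X i j =
      (∑ IJ ∈ Finset.univ.filter
          (fun IJ : Finset (Fin m) × Finset (Fin n) =>
            IJ.1.card = r + 1 ∧ IJ.2.card = r + 1),
        lam IJ *
          fderiv ℂ (minorFun IJ.1 IJ.2) (fun p => X p.1 p.2) (Pi.single (i, j) 1)) +
      ∑ p ∈ S, mu p * (if (i, j) = p then 1 else 0)) :
    (∀ i j : Fin m, (∀ k, (i, k) ∈ S ↔ (j, k) ∈ S) →
      (X * (U.map (Complex.ofReal))ᵀ - (U.map (Complex.ofReal)) * Xᵀ) i j = 0) ∧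
    (∀ i j : Fin n, (∀ k, (k, i) ∈ S ↔ (k, j) ∈ S) →
      (Xᵀ * (U.map (Complex.ofReal)) - (U.map (Complex.ofReal))ᵀ * X) i j = 0) :=
  stmt_14_general r S U X lam mu hminors hzero hlag
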